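/- arXiv:2510.07948 — 2 statements merged into one kernel-verified Lean document; each statement's English description precedes it below -/
import Mathlib

section
/- Let N be a positive integer, let Θ be a set with a distinguished element θ₀, let a : Θ → ℂ^N be a map (the steering-vector parametrization), let Π⊥ be a Hermitian idempotent N×N complex matrix, and let d ∈ ℂ with d ≠ 0. Assume (i) Π⊥ a(θ) ≠ 0 for all θ ∈ Θ, and (ii) unambiguity: for all θ ∈ Θ, if Π⊥ a(θ) and Π⊥ a(θ₀) are ℂ-linearly dependent then θ = θ₀. Let y satisfy Π⊥ y = d·(Π⊥ a(θ₀)), and define P(θ) = |a(θ)ᴴ Π⊥ y|² / (a(θ)ᴴ Π⊥ a(θ)). Then P(θ) < P(θ₀) for every θ ∈ Θ with θ ≠ θ₀; that is, θ₀ is the unique maximizer of the noise-free criterion. -/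
/-!
Because `Π⊥` is an orthogonal projection, `aᴴ Π⊥ v = ⟪Π⊥ a, Π⊥ v⟫`, so with `u = Π⊥ a(θ)` and
`w = Π⊥ a(θ₀)` the criterion is `P(θ) = |d|² |⟪u, w⟫|² / ‖u‖²` and `P(θ₀) = |d|² ‖w‖²`.
Cauchy–Schwarz gives `P(θ) ≤ P(θ₀)`, strictly unless `u` and `w` are dependent, which
unambiguity excludes for `θ ≠ θ₀`.
-/

open Matrix

section InnerProductSpace

variable {𝕜 E : Type*} [RCLike 𝕜] [NormedAddCommGroup E] [InnerProductSpace 𝕜 E]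

local notation "⟪" x ", " y "⟫" => inner 𝕜 x y

theorem norm_inner_lt_norm_mul_norm_of_linearIndependent {x y : E}
    (h : LinearIndependent 𝕜 ![x, y]) : ‖⟪x, y⟫‖ < ‖x‖ * ‖y‖ := by
  refine (norm_inner_le_norm x y).lt_of_ne fun heq => ?_
  rcases (norm_inner_eq_norm_tfae 𝕜 x y).out 0 2 |>.mp heq with hx | ⟨r, hy⟩
  · exact h.ne_zero 0 hx
  · have := LinearIndependent.pair_iff.mp h r (-1) (by rw [hy, neg_one_smul, add_neg_cancel])
    exact one_ne_zero (neg_eq_zero.mp this.2)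

theorem norm_inner_smul_sq_div_lt {u w : E} (h : LinearIndependent 𝕜 ![u, w]) {d : 𝕜}
    (hd : d ≠ 0) :
    ‖⟪u, d • w⟫‖ ^ 2 / ‖u‖ ^ 2 < ‖⟪w, d • w⟫‖ ^ 2 / ‖w‖ ^ 2 := by
  have hu : 0 < ‖u‖ := norm_pos_iff.mpr (h.ne_zero 0)
  have hw : 0 < ‖w‖ := norm_pos_iff.mpr (h.ne_zero 1)
  have hcs := norm_inner_lt_norm_mul_norm_of_linearIndependent h
  have hd' : 0 < ‖d‖ := norm_pos_iff.mpr hd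
  have hww : ‖⟪w, w⟫‖ = ‖w‖ ^ 2 := by simp [inner_self_eq_norm_sq_to_K]
  rw [inner_smul_right, inner_smul_right, norm_mul, norm_mul, hww,
    div_lt_div_iff₀ (by positivity) (by positivity)]
  calc (‖d‖ * ‖⟪u, w⟫‖) ^ 2 * ‖w‖ ^ 2 = ‖d‖ ^ 2 * ‖w‖ ^ 2 * ‖⟪u, w⟫‖ ^ 2 := by ring
    _ < ‖d‖ ^ 2 * ‖w‖ ^ 2 * (‖u‖ * ‖w‖) ^ 2 := by gcongr
    _ = (‖d‖ * ‖w‖ ^ 2) ^ 2 * ‖u‖ ^ 2 := by ring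

end InnerProductSpace

theorem star_dotProduct_mulVec_eq_inner {n : Type*} [Fintype n] {P : Matrix n n ℂ}
    (hH : P.IsHermitian) (hidem : IsIdempotentElem P) (a v : n → ℂ) :
    star a ⬝ᵥ P *ᵥ v = inner ℂ (WithLp.toLp 2 (P *ᵥ a)) (WithLp.toLp 2 (P *ᵥ v)) := by
  rw [EuclideanSpace.inner_toLp_toLp, dotProduct_comm (P *ᵥ v), star_mulVec, hH.eq,
    ← dotProduct_mulVec, mulVec_mulVec, hidem.eq]

theorem re_star_dotProduct_mulVec_self_eq_norm_sq {n : Type*} [Fintype n] {P : Matrix n n ℂ}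
    (hH : P.IsHermitian) (hidem : IsIdempotentElem P) (a : n → ℂ) :
    (star a ⬝ᵥ P *ᵥ a).re = ‖WithLp.toLp 2 (P *ᵥ a)‖ ^ 2 := by
  rw [star_dotProduct_mulVec_eq_inner hH hidem]
  exact inner_self_eq_norm_sq (𝕜 := ℂ) _

theorem linearIndependent_toLp_pair {R V : Type*} [Ring R] [AddCommGroup V] [Module R V]
    (p : ENNReal) {x y : V} (h : LinearIndependent R ![x, y]) :
    LinearIndependent R ![WithLp.toLp p x, WithLp.toLp p y] := by
  rw [LinearIndependent.pair_iff] at h ⊢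
  exact fun s t hst => h s t (congrArg WithLp.ofLp hst)

theorem statement10_general (N : ℕ) (Θ : Type*) (θ₀ : Θ)
    (a : Θ → Fin N → ℂ)
    (Piperp : Matrix (Fin N) (Fin N) ℂ)
    (hH : Piperp.IsHermitian) (hidem : Piperp * Piperp = Piperp)
    (d : ℂ) (hd : d ≠ 0)
    (hunamb : ∀ θ : Θ,
      ¬ LinearIndependent ℂ ![Piperp.mulVec (a θ), Piperp.mulVec (a θ₀)] → θ = θ₀)
    (y : Fin N → ℂ) (hy : Piperp.mulVec y = d • Piperp.mulVec (a θ₀)) :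
    ∀ θ : Θ, θ ≠ θ₀ →
      ‖star (a θ) ⬝ᵥ Piperp.mulVec y‖ ^ 2 / (star (a θ) ⬝ᵥ Piperp.mulVec (a θ)).re
        < ‖star (a θ₀) ⬝ᵥ Piperp.mulVec y‖ ^ 2
            / (star (a θ₀) ⬝ᵥ Piperp.mulVec (a θ₀)).re := by
  intro θ hθ
  have hindep : LinearIndependent ℂ ![Piperp *ᵥ a θ, Piperp *ᵥ a θ₀] :=
    not_not.mp (mt (hunamb θ) hθ)
  rw [re_star_dotProduct_mulVec_self_eq_norm_sq hH hidem,
    re_star_dotProduct_mulVec_self_eq_norm_sq hH hidem, star_dotProduct_mulVec_eq_inner hH hidem,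
    star_dotProduct_mulVec_eq_inner hH hidem, hy, WithLp.toLp_smul]
  exact norm_inner_smul_sq_div_lt (E := EuclideanSpace ℂ (Fin N))
    (linearIndependent_toLp_pair (R := ℂ) 2 hindep) hd

/-- Let `N` be a positive integer, `Θ` a set with a distinguished
element `θ₀`, `a : Θ → ℂ^N` a steering-vector parametrization, `Π⊥` a Hermitian
idempotent `N×N` complex matrix, and `d ∈ ℂ` with `d ≠ 0`. Assume (i) `Π⊥ a(θ) ≠ 0`
for all `θ`, and (ii) unambiguity: if `Π⊥ a(θ)` and `Π⊥ a(θ₀)` are `ℂ`-linearly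
dependent then `θ = θ₀`. Let `y` satisfy `Π⊥ y = d·(Π⊥ a(θ₀))`, and define
`P(θ) = |a(θ)ᴴ Π⊥ y|² / (a(θ)ᴴ Π⊥ a(θ))`. Then `P(θ) < P(θ₀)` for every `θ ≠ θ₀`;
that is, `θ₀` is the unique maximizer of the noise-free criterion. -/
theorem statement10 (N : ℕ) (hN : 0 < N) (Θ : Type*) (θ₀ : Θ)
    (a : Θ → Fin N → ℂ)
    (Piperp : Matrix (Fin N) (Fin N) ℂ)
    (hH : Piperp.IsHermitian) (hidem : Piperp * Piperp = Piperp)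
    (d : ℂ) (hd : d ≠ 0)
    (hnz : ∀ θ : Θ, Piperp.mulVec (a θ) ≠ 0)
    (hunamb : ∀ θ : Θ,
      ¬ LinearIndependent ℂ ![Piperp.mulVec (a θ), Piperp.mulVec (a θ₀)] → θ = θ₀)
    (y : Fin N → ℂ) (hy : Piperp.mulVec y = d • Piperp.mulVec (a θ₀)) :
    ∀ θ : Θ, θ ≠ θ₀ →
      ‖star (a θ) ⬝ᵥ Piperp.mulVec y‖ ^ 2 / (star (a θ) ⬝ᵥ Piperp.mulVec (a θ)).re
        < ‖star (a θ₀) ⬝ᵥ Piperp.mulVec y‖ ^ 2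
            / (star (a θ₀) ⬝ᵥ Piperp.mulVec (a θ₀)).re :=
  statement10_general N Θ θ₀ a Piperp hH hidem d hd hunamb y hy
end

section
/- Let N and L be positive integers, let b, d ∈ ℂ, let v ∈ ℂ^N with |vᵢ| = 1 for every i, and let c ∈ ℂ^L. Let Z = [ b·I + d·diag(v) , cᵀ ⊗ I ] be the N×N(L+1) matrix as above, and let J : ℂ^{N+L} → ℂ^{N(L+1)} be the linear map sending u = (u_{-L},…,u_{N-1}) to the vectorization of the N×(L+1) matrix with (n,l)-entry u_{n−l}. Then the composite map Z∘J : ℂ^{N+L} → ℂ^N has squared operator norm at most (L+1)·((|b| + |d|)² + ‖c‖²), and hence at most (L+1)·(2|b|² + 2|d|² + ‖c‖²). -/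
open Matrix Kronecker

noncomputable section

/-- The index (into the sample vector `u = (u₋L, …, u_{N−1})`, stored with offset
`L`) of the entry of `vec(S_I)` at position `idx`: the left block `Fin N` is column
`l = 0` (entries `u_n`), and position `(l, n) : Fin L × Fin N` in the right block is
column `l + 1` (entries `u_{n−(l+1)}`). -/
def colIndex (N L : ℕ) : (Fin N ⊕ Fin L × Fin N) → Fin (N + L) :=
  Sum.elim (fun n => ⟨n.val + L, by omega⟩)
    (fun p => ⟨p.2.val + L - (p.1.val + 1), by omega⟩)

/-- The selection map `J` of the paper, as a linear map from the illuminator sample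
vector `u ∈ ℂ^{N+L}` to the vectorization `vec(S_I) ∈ ℂ^{N(L+1)}` of the `N×(L+1)`
Toeplitz-type matrix with `(n,l)`-entry `u_{n−l}`. -/
def Jmap (N L : ℕ) : EuclideanSpace ℂ (Fin (N + L)) →ₗ[ℂ]
    EuclideanSpace ℂ (Fin N ⊕ Fin L × Fin N) where
  toFun u := WithLp.toLp 2 (fun idx => u (colIndex N L idx))
  map_add' _ _ := rfl
  map_smul' _ _ := rfl

/-! Bound `‖Z ∘ J‖ ≤ ‖Z‖ ‖J‖` in the `L²` operator norm. By the C⋆-identity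
`‖Z‖² = ‖Z Zᴴ‖ = ‖A Aᴴ + B Bᴴ‖ ≤ ‖A‖² + ‖B‖²`; here `A` is diagonal with entries of modulus at
most `|b| + |d|`, and `B Bᴴ = ‖c‖² I`. Each of the `L + 1` columns of the matrix vectorized by
`J u` is a window of `u`, so `‖J u‖² ≤ (L + 1) ‖u‖²`. -/

open scoped Matrix.Norms.L2Operator

lemma ContinuousLinearMap.opNorm_sq_le_of_norm_sq_le {𝕜 E F : Type*} [NontriviallyNormedField 𝕜]
    [SeminormedAddCommGroup E] [SeminormedAddCommGroup F] [NormedSpace 𝕜 E] [NormedSpace 𝕜 F]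
    (f : E →L[𝕜] F) {K : ℝ} (hK : 0 ≤ K) (h : ∀ x, ‖f x‖ ^ 2 ≤ K * ‖x‖ ^ 2) :
    ‖f‖ ^ 2 ≤ K := by
  refine (Real.le_sqrt (norm_nonneg f) hK).mp <| f.opNorm_le_bound (Real.sqrt_nonneg K) fun x => ?_
  rw [← Real.sqrt_sq (norm_nonneg (f x)), ← Real.sqrt_sq (norm_nonneg x), ← Real.sqrt_mul hK]
  exact Real.sqrt_le_sqrt (h x)

lemma Fintype.sum_comp_le_sum_of_injective {α β M : Type*} [Fintype α] [Fintype β]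
    [AddCommMonoid M] [PartialOrder M] [IsOrderedAddMonoid M] {g : α → β}
    (hg : Function.Injective g) {F : β → M} (hF : ∀ b, 0 ≤ F b) :
    ∑ a, F (g a) ≤ ∑ b, F b := by
  calc ∑ a, F (g a) = ∑ b ∈ Finset.univ.map ⟨g, hg⟩, F b :=
        (Finset.sum_map Finset.univ ⟨g, hg⟩ F).symm
    _ ≤ ∑ b, F b :=
      Finset.sum_le_sum_of_subset_of_nonneg (Finset.subset_univ _) fun b _ _ => hF b

namespace Matrix

variable {𝕜 : Type*} [RCLike 𝕜] {m n n₁ n₂ ι : Type*} [Fintype m] [Fintype n] [Fintype n₁]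
  [Fintype n₂] [Fintype ι] [DecidableEq n] [DecidableEq n₁] [DecidableEq n₂] [DecidableEq ι]

lemma opNorm_toEuclideanLin_comp_le {E : Type*} [NormedAddCommGroup E] [NormedSpace 𝕜 E]
    [FiniteDimensional 𝕜 E] (Z : Matrix m n 𝕜) (g : E →ₗ[𝕜] EuclideanSpace 𝕜 n) :
    ‖LinearMap.toContinuousLinearMap (toEuclideanLin Z ∘ₗ g)‖
      ≤ ‖Z‖ * ‖LinearMap.toContinuousLinearMap g‖ :=
  (LinearMap.toContinuousLinearMap (toEuclideanLin Z)).opNorm_comp_le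
    (LinearMap.toContinuousLinearMap g)

variable [DecidableEq m]

lemma l2_opNorm_sq_eq_mul_conjTranspose (A : Matrix m n 𝕜) : ‖A‖ ^ 2 = ‖A * Aᴴ‖ := by
  rw [← l2_opNorm_conjTranspose A, sq, ← l2_opNorm_conjTranspose_mul_self,
    conjTranspose_conjTranspose]

lemma l2_opNorm_fromCols_sq_le (A : Matrix m n₁ 𝕜) (B : Matrix m n₂ 𝕜) :
    ‖fromCols A B‖ ^ 2 ≤ ‖A‖ ^ 2 + ‖B‖ ^ 2 := by
  rw [l2_opNorm_sq_eq_mul_conjTranspose, l2_opNorm_sq_eq_mul_conjTranspose,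
    l2_opNorm_sq_eq_mul_conjTranspose, conjTranspose_fromCols_eq_fromRows_conjTranspose,
    fromCols_mul_fromRows]
  exact norm_add_le _ _

lemma l2_opNorm_smul_one_add_smul_diagonal_le (b d : 𝕜) {v : n → 𝕜} (hv : ∀ i, ‖v i‖ ≤ 1) :
    ‖b • (1 : Matrix n n 𝕜) + d • diagonal v‖ ≤ ‖b‖ + ‖d‖ := by
  have hone : ‖(1 : Matrix n n 𝕜)‖ ≤ 1 := by
    rw [← diagonal_one, l2_opNorm_diagonal]
    exact (pi_norm_const_le (1 : 𝕜)).trans_eq norm_one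
  have hdiag : ‖diagonal v‖ ≤ 1 := by
    rw [l2_opNorm_diagonal]
    exact (pi_norm_le_iff_of_nonneg zero_le_one).mpr hv
  calc ‖b • (1 : Matrix n n 𝕜) + d • diagonal v‖
      ≤ ‖b‖ * ‖(1 : Matrix n n 𝕜)‖ + ‖d‖ * ‖diagonal v‖ :=
        (norm_add_le _ _).trans (add_le_add (norm_smul_le _ _) (norm_smul_le _ _))
    _ ≤ ‖b‖ + ‖d‖ := by
        gcongr
        · exact mul_le_of_le_one_right (norm_nonneg b) hone
        · exact mul_le_of_le_one_right (norm_nonneg d) hdiag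

lemma l2_opNorm_sq_replicateRow_kronecker_one_le (c : ι → 𝕜) :
    ‖(of fun i p => (replicateRow Unit c ⊗ₖ (1 : Matrix n n 𝕜)) ((), i) p :
        Matrix n (ι × n) 𝕜)‖ ^ 2 ≤ ∑ l, ‖c l‖ ^ 2 := by
  set B : Matrix n (ι × n) 𝕜 := of fun i p => (replicateRow Unit c ⊗ₖ (1 : Matrix n n 𝕜)) ((), i) p
  have hBB : B * Bᴴ = diagonal fun _ => ((∑ l, ‖c l‖ ^ 2 : ℝ) : 𝕜) := by
    ext i j
    by_cases hij : i = j
    · subst hij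
      simp [B, mul_apply, Fintype.sum_prod_type, one_apply, RCLike.mul_conj, apply_ite]
    · simp [B, mul_apply, Fintype.sum_prod_type, one_apply, hij, Ne.symm hij]
  rw [l2_opNorm_sq_eq_mul_conjTranspose, hBB, l2_opNorm_diagonal]
  refine (pi_norm_const_le _).trans_eq ?_
  rw [RCLike.norm_ofReal, abs_of_nonneg (by positivity)]

end Matrix

lemma colIndex_inl_injective (N L : ℕ) :
    Function.Injective fun n : Fin N => colIndex N L (Sum.inl n) := fun n n' h => by
  simp only [colIndex, Sum.elim_inl, Fin.mk.injEq] at h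
  exact Fin.ext (by omega)

lemma colIndex_inr_injective (N L : ℕ) (l : Fin L) :
    Function.Injective fun n : Fin N => colIndex N L (Sum.inr (l, n)) := fun n n' h => by
  simp only [colIndex, Sum.elim_inr, Fin.mk.injEq] at h
  exact Fin.ext (by omega)

lemma norm_Jmap_sq_le (N L : ℕ) (u : EuclideanSpace ℂ (Fin (N + L))) :
    ‖Jmap N L u‖ ^ 2 ≤ (L + 1) * ‖u‖ ^ 2 := by
  have hcol {g : Fin N → Fin (N + L)} (hg : Function.Injective g) :
      ∑ n, ‖u (g n)‖ ^ 2 ≤ ‖u‖ ^ 2 := by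
    rw [EuclideanSpace.norm_sq_eq]
    exact Fintype.sum_comp_le_sum_of_injective (F := fun i => ‖u i‖ ^ 2) hg fun _ => by positivity
  calc ‖Jmap N L u‖ ^ 2
      = ∑ n, ‖u (colIndex N L (Sum.inl n))‖ ^ 2
          + ∑ l, ∑ n, ‖u (colIndex N L (Sum.inr (l, n)))‖ ^ 2 := by
        rw [EuclideanSpace.norm_sq_eq, Fintype.sum_sum_type, Fintype.sum_prod_type]
        rfl
    _ ≤ ‖u‖ ^ 2 + ∑ _l : Fin L, ‖u‖ ^ 2 :=
        add_le_add (hcol (colIndex_inl_injective N L))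
          (Finset.sum_le_sum fun l _ => hcol (colIndex_inr_injective N L l))
    _ = (L + 1) * ‖u‖ ^ 2 := by
        rw [Finset.sum_const, Finset.card_univ, Fintype.card_fin, nsmul_eq_mul]
        ring

lemma opNorm_Jmap_sq_le (N L : ℕ) :
    ‖LinearMap.toContinuousLinearMap (Jmap N L)‖ ^ 2 ≤ L + 1 :=
  ContinuousLinearMap.opNorm_sq_le_of_norm_sq_le _ (by positivity) (norm_Jmap_sq_le N L)

theorem statement14_general (N L : ℕ) (b d : ℂ)
    (v : Fin N → ℂ) (hv : ∀ i, ‖v i‖ = 1) (c : Fin L → ℂ)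
    (A : Matrix (Fin N) (Fin N) ℂ) (hA : A = b • 1 + d • Matrix.diagonal v)
    (B : Matrix (Fin N) (Fin L × Fin N) ℂ)
    (hB : B = Matrix.of fun i p =>
      ((Matrix.replicateRow Unit c) ⊗ₖ (1 : Matrix (Fin N) (Fin N) ℂ)) ((), i) p)
    (Z : Matrix (Fin N) (Fin N ⊕ Fin L × Fin N) ℂ)
    (hZ : Z = Matrix.fromCols A B) :
    ‖LinearMap.toContinuousLinearMap
        ((Matrix.toEuclideanLin Z).comp (Jmap N L))‖ ^ 2
        ≤ (L + 1 : ℝ) * ((‖b‖ + ‖d‖) ^ 2 + ∑ l, ‖c l‖ ^ 2)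
      ∧ ‖LinearMap.toContinuousLinearMap
          ((Matrix.toEuclideanLin Z).comp (Jmap N L))‖ ^ 2
          ≤ (L + 1 : ℝ) * (2 * ‖b‖ ^ 2 + 2 * ‖d‖ ^ 2 + ∑ l, ‖c l‖ ^ 2) := by
  have hZnorm : ‖Z‖ ^ 2 ≤ (‖b‖ + ‖d‖) ^ 2 + ∑ l, ‖c l‖ ^ 2 := by
    have hAnorm : ‖A‖ ≤ ‖b‖ + ‖d‖ :=
      hA ▸ l2_opNorm_smul_one_add_smul_diagonal_le b d fun i => (hv i).le
    calc ‖Z‖ ^ 2 ≤ ‖A‖ ^ 2 + ‖B‖ ^ 2 := hZ ▸ l2_opNorm_fromCols_sq_le A B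
      _ ≤ (‖b‖ + ‖d‖) ^ 2 + ∑ l, ‖c l‖ ^ 2 := by
        gcongr
        exact hB ▸ l2_opNorm_sq_replicateRow_kronecker_one_le c
  have hmain : ‖LinearMap.toContinuousLinearMap ((Matrix.toEuclideanLin Z).comp (Jmap N L))‖ ^ 2
      ≤ (L + 1 : ℝ) * ((‖b‖ + ‖d‖) ^ 2 + ∑ l, ‖c l‖ ^ 2) := by
    grw [opNorm_toEuclideanLin_comp_le Z (Jmap N L), mul_pow, hZnorm, opNorm_Jmap_sq_le, mul_comm]
  refine ⟨hmain, hmain.trans ?_⟩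
  have hsq : (‖b‖ + ‖d‖) ^ 2 ≤ 2 * (‖b‖ ^ 2 + ‖d‖ ^ 2) := add_sq_le
  gcongr
  linarith

/-- Let `N, L` be positive integers, `b, d ∈ ℂ`, `v ∈ ℂ^N` with
`|vᵢ| = 1` for every `i`, and `c ∈ ℂ^L`. Let `Z = [ b·I + d·diag(v) , cᵀ ⊗ I ]` be
the `N×N(L+1)` matrix and `J : ℂ^{N+L} → ℂ^{N(L+1)}` the linear map sending
`u = (u₋L,…,u_{N−1})` to the vectorization of the `N×(L+1)` matrix with
`(n,l)`-entry `u_{n−l}`. Then the composite `Z∘J : ℂ^{N+L} → ℂ^N` has squared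
operator norm at most `(L+1)·((|b| + |d|)² + ‖c‖²)`, and hence at most
`(L+1)·(2|b|² + 2|d|² + ‖c‖²)`. -/
theorem statement14 (N L : ℕ) (hN : 0 < N) (hL : 0 < L) (b d : ℂ)
    (v : Fin N → ℂ) (hv : ∀ i, ‖v i‖ = 1) (c : Fin L → ℂ)
    (A : Matrix (Fin N) (Fin N) ℂ) (hA : A = b • 1 + d • Matrix.diagonal v)
    (B : Matrix (Fin N) (Fin L × Fin N) ℂ)
    (hB : B = Matrix.of fun i p =>
      ((Matrix.replicateRow Unit c) ⊗ₖ (1 : Matrix (Fin N) (Fin N) ℂ)) ((), i) p)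
    (Z : Matrix (Fin N) (Fin N ⊕ Fin L × Fin N) ℂ)
    (hZ : Z = Matrix.fromCols A B) :
    ‖LinearMap.toContinuousLinearMap
        ((Matrix.toEuclideanLin Z).comp (Jmap N L))‖ ^ 2
        ≤ (L + 1 : ℝ) * ((‖b‖ + ‖d‖) ^ 2 + ∑ l, ‖c l‖ ^ 2)
      ∧ ‖LinearMap.toContinuousLinearMap
          ((Matrix.toEuclideanLin Z).comp (Jmap N L))‖ ^ 2
          ≤ (L + 1 : ℝ) * (2 * ‖b‖ ^ 2 + 2 * ‖d‖ ^ 2 + ∑ l, ‖c l‖ ^ 2) :=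
  statement14_general N L b d v hv c A hA B hB Z hZ
end
end
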